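/- arXiv:cs/0007033 — 2 statements merged into one kernel-verified Lean document; each statement's English description precedes it below -/
import Mathlib

section
/- Let ≼ be a partial entrenchment on B. The maxiconsistent inference relation ⊢~ satisfies Rational Monotonicity (for all a, b, c: if not a ⊢~ bᶜ and a ⊢~ c, then a ⊓ b ⊢~ c) if and only if for all a, b, c ∈ B: whenever Fmax(a) ∩ Fmax(a ⊓ b) ≠ ∅ and aᶜ ⊔ c belongs to every member of Fmax(a), then (a ⊓ b)ᶜ ⊔ c belongs to every member of Fmax(a ⊓ b). -/
variable {B : Type*} [BooleanAlgebra B]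

/-- A partial entrenchment: Transitivity, Dominance, Conjunction. -/
def PartialEntrenchment (r : B → B → Prop) : Prop :=
  (∀ a b c : B, r a b → r b c → r a c) ∧
  (∀ a b : B, a ≤ b → r a b) ∧
  (∀ a b c : B, r c a → r c b → r c (a ⊓ b))

/-- A ≼-filter: nonempty, proper, upper-closed under ≼, closed under meet. -/
def IsEntFilter (r : B → B → Prop) (F : Set B) : Prop :=
  F.Nonempty ∧ F ≠ Set.univ ∧
  (∀ a b : B, a ∈ F → r a b → b ∈ F) ∧
  (∀ a b : B, a ∈ F → b ∈ F → a ⊓ b ∈ F)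

/-- Coh(a) = {b | ¬ b ≼ aᶜ}. -/
def Coh (r : B → B → Prop) (a : B) : Set B := {b | ¬ r b aᶜ}

/-- The base F(a): all ≼-filters contained in Coh(a). -/
def entBase (r : B → B → Prop) (a : B) : Set (Set B) :=
  {F | IsEntFilter r F ∧ F ⊆ Coh r a}

/-- The maximal base Fmax(a): ⊆-maximal members of the base. -/
def entMaxBase (r : B → B → Prop) (a : B) : Set (Set B) :=
  {F | F ∈ entBase r a ∧ ∀ F' ∈ entBase r a, F ⊆ F' → F = F'}

/-- Maxiconsistent inference: a ⊢~ b iff every F ∈ Fmax(a) has f ∈ F with f ⊓ a ≤ b. -/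
def MaxInfer (r : B → B → Prop) (a b : B) : Prop :=
  ∀ F ∈ entMaxBase r a, ∃ f ∈ F, f ⊓ a ≤ b


lemma coh_iff (r : B → B → Prop) (hr : PartialEntrenchment r) {F : Set B}
    (hF : IsEntFilter r F) {a : B} : F ⊆ Coh r a ↔ aᶜ ∉ F := by
  constructor
  · intro h hmem
    exact h hmem (hr.2.1 _ _ le_rfl)
  · intro h x hx hrx
    exact h (hF.2.2.1 _ _ hx hrx)

lemma exists_iff (r : B → B → Prop) (hr : PartialEntrenchment r) {F : Set B}
    (hF : IsEntFilter r F) (a b : B) : (∃ f ∈ F, f ⊓ a ≤ b) ↔ aᶜ ⊔ b ∈ F := by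
  constructor
  · rintro ⟨f, hf, hle⟩
    refine hF.2.2.1 _ _ hf (hr.2.1 _ _ ?_)
    rw [sup_comm, ← himp_eq, le_himp_iff]
    exact hle
  · intro h
    refine ⟨aᶜ ⊔ b, h, ?_⟩
    rw [sup_comm, ← himp_eq]
    exact himp_inf_le

lemma maxInfer_iff (r : B → B → Prop) (hr : PartialEntrenchment r) (a b : B) :
    MaxInfer r a b ↔ ∀ F ∈ entMaxBase r a, aᶜ ⊔ b ∈ F := by
  unfold MaxInfer
  refine forall_congr' fun F => imp_congr_right fun hF => ?_
  exact exists_iff r hr hF.1.1 a b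

lemma base_mono (r : B → B → Prop) (hr : PartialEntrenchment r) (a b : B) :
    entBase r (a ⊓ b) ⊆ entBase r a := by
  rintro F ⟨hF, hsub⟩
  refine ⟨hF, (coh_iff r hr hF).mpr fun hmem => ?_⟩
  exact (coh_iff r hr hF).mp hsub
    (hF.2.2.1 _ _ hmem (hr.2.1 _ _ (compl_le_compl inf_le_left)))

lemma notMaxInfer_iff (r : B → B → Prop) (hr : PartialEntrenchment r) (a b : B) :
    ¬ MaxInfer r a bᶜ ↔ (entMaxBase r a ∩ entMaxBase r (a ⊓ b)).Nonempty := by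
  rw [maxInfer_iff r hr]
  push_neg
  constructor
  · rintro ⟨F, hF, hnm⟩
    have hnm' : (a ⊓ b)ᶜ ∉ F := by rwa [compl_inf]
    refine ⟨F, hF, ⟨⟨hF.1.1, (coh_iff r hr hF.1.1).mpr hnm'⟩, ?_⟩⟩
    intro F' hF' hsub
    exact hF.2 F' (base_mono r hr a b hF') hsub
  · rintro ⟨F, hFa, hFab⟩
    refine ⟨F, hFa, ?_⟩
    rw [← compl_inf]
    exact (coh_iff r hr hFab.1.1).mp hFab.1.2

theorem stmt11 (r : B → B → Prop) (hr : PartialEntrenchment r) :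
    (∀ a b c : B, ¬ MaxInfer r a bᶜ → MaxInfer r a c → MaxInfer r (a ⊓ b) c) ↔
    (∀ a b c : B,
      (entMaxBase r a ∩ entMaxBase r (a ⊓ b)).Nonempty →
      (∀ F ∈ entMaxBase r a, aᶜ ⊔ c ∈ F) →
      (∀ F ∈ entMaxBase r (a ⊓ b), (a ⊓ b)ᶜ ⊔ c ∈ F)) := by
  constructor
  · intro h a b c hne hall F hF
    have hni : ¬ MaxInfer r a bᶜ := (notMaxInfer_iff r hr a b).mpr hne
    have hc : MaxInfer r a c := (maxInfer_iff r hr a c).mpr hall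
    exact (maxInfer_iff r hr (a ⊓ b) c).mp (h a b c hni hc) F hF
  · intro h a b c hni hc
    rw [maxInfer_iff r hr]
    exact h a b c ((notMaxInfer_iff r hr a b).mp hni) ((maxInfer_iff r hr a c).mp hc)
end

section
/- Let |∼ be a rational inference relation on B (a preferential inference relation also satisfying Rational Monotonicity: a |∼ c and not a |∼ bᶜ imply a ⊓ b |∼ c) and define ≼ = P(|∼), i.e., a ≼ b iff (aᶜ ⊔ bᶜ) |∼ aᶜ. Then ≼ is a weakly disjunctive partial entrenchment satisfying Splitting (for all a, b, c: if not (a ⊔ bᶜ) ≼ a and (a ⊔ c) ≼ a, then (a ⊔ b ⊔ c) ≼ (a ⊔ b)), and for all a, b ∈ B: a |∼ b if and only if a ⊢~ b, where ⊢~ is the maxiconsistent inference relation of ≼. -/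
variable {B : Type*} [BooleanAlgebra B]

/-- A preferential inference relation: Supraclassicality, Right Weakening, And,
Cut, Cautious Monotonicity, Or. -/
def Preferential (s : B → B → Prop) : Prop :=
  (∀ a b : B, a ≤ b → s a b) ∧
  (∀ a b c : B, s a b → b ≤ c → s a c) ∧
  (∀ a b c : B, s a b → s a c → s a (b ⊓ c)) ∧
  (∀ a b c : B, s a b → s (a ⊓ b) c → s a c) ∧
  (∀ a b c : B, s a b → s a c → s (a ⊓ b) c) ∧
  (∀ a b c : B, s a c → s b c → s (a ⊔ b) c)

/-- Weak Disjunction. -/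
def WeakDisjunctive (r : B → B → Prop) : Prop :=
  ∀ a b c : B, r (aᶜ ⊔ b) aᶜ → r (aᶜ ⊔ c) aᶜ → r (aᶜ ⊔ b ⊔ c) aᶜ

/-- N(≼): a N b iff (aᶜ ⊔ bᶜ) ≼ aᶜ. -/
def Nrel (r : B → B → Prop) (a b : B) : Prop := r (aᶜ ⊔ bᶜ) aᶜ

/-- P(|∼): a P b iff (aᶜ ⊔ bᶜ) |∼ aᶜ. -/
def Prel (s : B → B → Prop) (a b : B) : Prop := s (aᶜ ⊔ bᶜ) aᶜ

/-- Splitting. -/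
def Splitting (r : B → B → Prop) : Prop :=
  ∀ a b c : B, ¬ r (a ⊔ bᶜ) a → r (a ⊔ c) a → r (a ⊔ b ⊔ c) (a ⊔ b)


section Aux

variable {s : B → B → Prop}

private lemma pref_refl (hs : Preferential s) (a : B) : s a a := hs.1 a a le_rfl

/-- Transitivity of the plausibility comparison `x ⊔ y |~ x`. -/
private lemma key_trans (hs : Preferential s) {x y z : B}
    (hxy : s (x ⊔ y) x) (hyz : s (y ⊔ z) y) : s (x ⊔ z) x := by
  obtain ⟨sup', rw', and', cut', cm', or'⟩ := hs
  have h1 : s (y ⊔ z) (x ⊔ y) := rw' _ _ _ hyz le_sup_right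
  have h2 : s x (x ⊔ y) := sup' _ _ le_sup_left
  have h3 : s (x ⊔ (y ⊔ z)) (x ⊔ y) := or' _ _ _ h2 h1
  have he : (x ⊔ (y ⊔ z)) ⊓ (x ⊔ y) = x ⊔ y :=
    inf_eq_right.mpr (sup_le_sup_left le_sup_left x)
  have h4 : s (x ⊔ (y ⊔ z)) x := cut' _ _ _ h3 (by rw [he]; exact hxy)
  have h5 : s (x ⊔ (y ⊔ z)) (x ⊔ z) := rw' _ _ _ h4 le_sup_left
  have h6 := cm' _ _ _ h5 h4
  have he2 : (x ⊔ (y ⊔ z)) ⊓ (x ⊔ z) = x ⊔ z :=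
    inf_eq_right.mpr (sup_le_sup_left le_sup_right x)
  rwa [he2] at h6

private lemma prel_dom (hs : Preferential s) {a b : B} (h : a ≤ b) : Prel s a b := by
  unfold Prel
  rw [sup_eq_left.mpr (compl_le_compl h)]
  exact pref_refl hs _

private lemma prel_trans (hs : Preferential s) {a b c : B}
    (h1 : Prel s a b) (h2 : Prel s b c) : Prel s a c :=
  key_trans hs h1 h2

private lemma prel_conj (hs : Preferential s) {a b c : B}
    (h1 : Prel s c a) (h2 : Prel s c b) : Prel s c (a ⊓ b) := by
  unfold Prel at *
  have h3 := hs.2.2.2.2.2 _ _ _ h1 h2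
  rwa [← sup_sup_distrib_left, ← compl_inf] at h3

/-- Key lemma: if `s a b` and `f` is coherent with `a`, then `f ⊓ (aᶜ ⊔ b)` is
not entrenched below `aᶜ` (in normalized form). -/
private lemma lemA (hs : Preferential s)
    (hrm : ∀ a b c : B, s a c → ¬ s a bᶜ → s (a ⊓ b) c) {a b f : B}
    (hab : s a b) (hf : ¬ s (fᶜ ⊔ a) fᶜ) : ¬ s (fᶜ ⊔ a) (fᶜ ⊔ a ⊓ bᶜ) := by
  intro h
  obtain ⟨sup', rw', and', cut', cm', or'⟩ := hs
  have hnaf : ¬ s a fᶜ := by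
    intro hc
    apply hf
    have h9 : s (a ⊔ fᶜ) fᶜ := or' _ _ _ hc (sup' _ _ le_rfl)
    rwa [sup_comm] at h9
  have h2 : s ((fᶜ ⊔ a) ⊓ f) (fᶜ ⊔ a ⊓ bᶜ) := hrm _ _ _ h hf
  have e1 : (fᶜ ⊔ a) ⊓ f = a ⊓ f := by
    rw [inf_sup_right, compl_inf_self, bot_sup_eq]
  rw [e1] at h2
  have h3 : s (a ⊓ f) f := sup' _ _ inf_le_right
  have h4 : s (a ⊓ f) ((fᶜ ⊔ a ⊓ bᶜ) ⊓ f) := and' _ _ _ h2 h3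
  have h5 : s (a ⊓ f) bᶜ := rw' _ _ _ h4 (by
    rw [inf_sup_right, compl_inf_self, bot_sup_eq]
    exact inf_le_left.trans inf_le_right)
  have h6 : s (a ⊓ f) b := hrm _ _ _ hab hnaf
  have h7 : s (a ⊓ f) (b ⊓ bᶜ) := and' _ _ _ h6 h5
  have h8 : s (a ⊓ f) fᶜ := rw' _ _ _ h7 (by rw [inf_compl_self]; exact bot_le)
  have h9 : s ((a ⊓ f) ⊔ fᶜ) fᶜ := or' _ _ _ h8 (sup' _ _ le_rfl)
  apply hf
  rwa [sup_comm, sup_inf_left, compl_sup_eq_top, inf_top_eq] at h9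

/-- Membership in `Coh (Prel s) a`, normalized. -/
private lemma mem_coh_iff {a f : B} : f ∈ Coh (Prel s) a ↔ ¬ s (fᶜ ⊔ a) fᶜ := by
  simp only [Coh, Set.mem_setOf_eq, Prel, compl_compl]

private lemma bot_not_coh (hs : Preferential s) (a : B) : ⊥ ∉ Coh (Prel s) a := by
  simp only [Coh, Set.mem_setOf_eq, not_not]
  exact prel_dom hs bot_le

private lemma coh_upper (hs : Preferential s) {a f g : B}
    (hf : f ∈ Coh (Prel s) a) (hfg : Prel s f g) : g ∈ Coh (Prel s) a := by
  simp only [Coh, Set.mem_setOf_eq] at *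
  exact fun hg => hf (prel_trans hs hfg hg)

/-- Main forward direction: `s a b` implies `aᶜ ⊔ b` belongs to every maximal base filter. -/
private lemma fwd_mem (hs : Preferential s)
    (hrm : ∀ a b c : B, s a c → ¬ s a bᶜ → s (a ⊓ b) c) {a b : B}
    (hab : s a b) {F : Set B} (hF : F ∈ entMaxBase (Prel s) a) : aᶜ ⊔ b ∈ F := by
  obtain ⟨⟨⟨hne, hproper, hup, hmeet⟩, hsub⟩, hmax⟩ := hF
  by_contra hx
  set x := aᶜ ⊔ b with hxdef
  -- for any f ∈ F, f ⊓ x is coherent with a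
  have hcoh : ∀ f ∈ F, f ⊓ x ∈ Coh (Prel s) a := by
    intro f hfF
    rw [mem_coh_iff]
    have hfc : ¬ s (fᶜ ⊔ a) fᶜ := mem_coh_iff.mp (hsub hfF)
    have key := lemA hs hrm hab hfc (b := b)
    intro hcon
    apply key
    have e : (f ⊓ x)ᶜ ⊔ a = fᶜ ⊔ a := by
      rw [hxdef, compl_inf, compl_sup, compl_compl, sup_assoc,
        sup_eq_right.mpr (inf_le_left : a ⊓ bᶜ ≤ a)]
    have e2 : (f ⊓ x)ᶜ = fᶜ ⊔ a ⊓ bᶜ := by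
      rw [hxdef, compl_inf, compl_sup, compl_compl]
    rw [e, e2] at hcon
    exact hcon
  -- the extended filter
  set F' : Set B := {g | ∃ f ∈ F, Prel s (f ⊓ x) g} with hF'def
  have hFF' : F ⊆ F' := fun f hf => ⟨f, hf, prel_dom hs inf_le_left⟩
  have hxF' : x ∈ F' := by
    obtain ⟨f0, hf0⟩ := hne
    exact ⟨f0, hf0, prel_dom hs inf_le_right⟩
  have hF'coh : F' ⊆ Coh (Prel s) a := by
    rintro g ⟨f, hfF, hfg⟩
    exact coh_upper hs (hcoh f hfF) hfg
  have hF'base : F' ∈ entBase (Prel s) a := by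
    refine ⟨⟨⟨x, hxF'⟩, ?_, ?_, ?_⟩, hF'coh⟩
    · intro hu
      exact bot_not_coh hs a (hF'coh (hu ▸ Set.mem_univ ⊥))
    · rintro g h ⟨f, hfF, hfg⟩ hgh
      exact ⟨f, hfF, prel_trans hs hfg hgh⟩
    · rintro g h ⟨f1, hf1, hg⟩ ⟨f2, hf2, hh⟩
      refine ⟨f1 ⊓ f2, hmeet _ _ hf1 hf2, ?_⟩
      have d1 : Prel s (f1 ⊓ f2 ⊓ x) g :=
        prel_trans hs (prel_dom hs (by gcongr; exact inf_le_left)) hg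
      have d2 : Prel s (f1 ⊓ f2 ⊓ x) h :=
        prel_trans hs (prel_dom hs (by gcongr; exact inf_le_right)) hh
      exact prel_conj hs d1 d2
  have := hmax F' hF'base hFF'
  exact hx (this ▸ hxF')


/-- Backward direction via Zorn's lemma. -/
private lemma bwd_infer (hs : Preferential s) {a b : B}
    (h : MaxInfer (Prel s) a b) : s a b := by
  by_contra hn
  set f := aᶜ ⊔ bᶜ with hfdef
  have hfcoh : f ∈ Coh (Prel s) a := by
    rw [mem_coh_iff]
    intro hc
    have e : fᶜ = a ⊓ b := by rw [hfdef, compl_sup, compl_compl, compl_compl]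
    rw [e, sup_eq_right.mpr (inf_le_left : a ⊓ b ≤ a)] at hc
    exact hn (hs.2.1 _ _ _ hc inf_le_right)
  set F0 : Set B := {g | Prel s f g} with hF0def
  have hF0base : F0 ∈ entBase (Prel s) a := by
    have hsub : F0 ⊆ Coh (Prel s) a := fun g hg => coh_upper hs hfcoh hg
    refine ⟨⟨⟨f, prel_dom hs le_rfl⟩, ?_, ?_, ?_⟩, hsub⟩
    · intro hu
      exact bot_not_coh hs a (hsub (hu ▸ Set.mem_univ ⊥))
    · intro g h' hg hgh
      exact prel_trans hs hg hgh
    · intro g h' hg hh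
      exact prel_conj hs hg hh
  have hchains : ∀ c ⊆ entBase (Prel s) a, IsChain (· ⊆ ·) c → c.Nonempty →
      ∃ ub ∈ entBase (Prel s) a, ∀ t ∈ c, t ⊆ ub := by
    intro c hcsub hchain hcne
    refine ⟨⋃₀ c, ?_, fun t ht => Set.subset_sUnion_of_mem ht⟩
    obtain ⟨F1, hF1c⟩ := hcne
    obtain ⟨⟨hne1, -, -, -⟩, -⟩ := id (hcsub hF1c)
    have hsub : ⋃₀ c ⊆ Coh (Prel s) a := by
      rintro g ⟨t, htc, hgt⟩
      exact (hcsub htc).2 hgt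
    refine ⟨⟨?_, ?_, ?_, ?_⟩, hsub⟩
    · obtain ⟨g, hg⟩ := hne1
      exact ⟨g, F1, hF1c, hg⟩
    · intro hu
      exact bot_not_coh hs a (hsub (hu ▸ Set.mem_univ ⊥))
    · rintro g h' ⟨t, htc, hgt⟩ hgh
      exact ⟨t, htc, (hcsub htc).1.2.2.1 _ _ hgt hgh⟩
    · rintro g h' ⟨t1, ht1, hg⟩ ⟨t2, ht2, hh⟩
      rcases hchain.total ht1 ht2 with hle | hle
      · exact ⟨t2, ht2, (hcsub ht2).1.2.2.2 _ _ (hle hg) hh⟩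
      · exact ⟨t1, ht1, (hcsub ht1).1.2.2.2 _ _ hg (hle hh)⟩
  obtain ⟨m, hF0m, hmmax⟩ := zorn_subset_nonempty (entBase (Prel s) a) hchains F0 hF0base
  have hmmem : m ∈ entMaxBase (Prel s) a :=
    ⟨hmmax.1, fun F' hF' hsub => Set.Subset.antisymm hsub (hmmax.2 hF' hsub)⟩
  obtain ⟨g, hgm, hgb⟩ := h m hmmem
  have hgle : g ≤ aᶜ ⊔ b := by
    rw [sup_comm, ← himp_eq]; exact le_himp_iff.mpr hgb
  have hxm : aᶜ ⊔ b ∈ m := hmmax.1.1.2.2.1 _ _ hgm (prel_dom hs hgle)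
  have hfm : f ∈ m := hF0m (prel_dom hs le_rfl)
  have hmeet := hmmax.1.1.2.2.2 _ _ hfm hxm
  have e : f ⊓ (aᶜ ⊔ b) = aᶜ := by
    rw [hfdef, ← sup_inf_left, compl_inf_self, sup_bot_eq]
  rw [e] at hmeet
  have hc := mem_coh_iff.mp (hmmax.1.2 hmeet)
  apply hc
  rw [compl_compl, sup_idem]
  exact pref_refl hs a

end Aux


theorem stmt19 (s : B → B → Prop) (hs : Preferential s)
    (hrm : ∀ a b c : B, s a c → ¬ s a bᶜ → s (a ⊓ b) c) :
    PartialEntrenchment (Prel s : B → B → Prop) ∧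
    WeakDisjunctive (Prel s : B → B → Prop) ∧
    Splitting (Prel s : B → B → Prop) ∧
    (∀ a b : B, s a b ↔ MaxInfer (Prel s) a b) := by
  obtain ⟨sup', rw', and', cut', cm', or'⟩ := id hs
  refine ⟨⟨fun a b c h1 h2 => prel_trans hs h1 h2,
          fun a b h => prel_dom hs h,
          fun a b c h1 h2 => prel_conj hs h1 h2⟩, ?_, ?_, ?_⟩
  · -- Weak Disjunction
    intro a b c h1 h2
    simp only [Prel, compl_sup, compl_compl] at h1 h2 ⊢
    rw [sup_eq_right.mpr (inf_le_left : a ⊓ bᶜ ≤ a)] at h1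
    rw [sup_eq_right.mpr (inf_le_left : a ⊓ cᶜ ≤ a)] at h2
    rw [sup_eq_right.mpr ((inf_le_left.trans inf_le_left) : a ⊓ bᶜ ⊓ cᶜ ≤ a)]
    have h3 : s a ((a ⊓ bᶜ) ⊓ (a ⊓ cᶜ)) := and' _ _ _ h1 h2
    refine rw' _ _ _ h3 ?_
    have : (a ⊓ bᶜ) ⊓ (a ⊓ cᶜ) ≤ (a ⊓ bᶜ) ⊓ cᶜ := by gcongr; exact inf_le_right
    exact this
  · -- Splitting
    intro a b c h1 h2
    simp only [Prel, compl_sup, compl_compl] at h1 h2 ⊢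
    rw [sup_eq_right.mpr (inf_le_left : aᶜ ⊓ b ≤ aᶜ)] at h1
    rw [sup_eq_right.mpr (inf_le_left : aᶜ ⊓ cᶜ ≤ aᶜ)] at h2
    rw [sup_eq_right.mpr (inf_le_left : aᶜ ⊓ bᶜ ⊓ cᶜ ≤ aᶜ ⊓ bᶜ)]
    have h2' : s aᶜ cᶜ := rw' _ _ _ h2 inf_le_right
    have hnb : ¬ s aᶜ b := fun hc => h1 (and' _ _ _ (pref_refl hs aᶜ) hc)
    have h3 : s (aᶜ ⊓ bᶜ) cᶜ := hrm _ _ _ h2' (by rwa [compl_compl])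
    exact and' _ _ _ (pref_refl hs _) h3
  · -- the representation
    intro a b
    constructor
    · intro hab F hF
      refine ⟨aᶜ ⊔ b, fwd_mem hs hrm hab hF, ?_⟩
      rw [inf_sup_right, compl_inf_self, bot_sup_eq]
      exact inf_le_left
    · exact bwd_infer hs
end
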